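/- arXiv:2205.03933 — 2 statements merged into one kernel-verified Lean document; each statement's English description precedes it below -/
import Mathlib

section
/- Let Σ be a finite alphabet of size q ≥ 2 and let n, L_min, L_over be positive integers with n ≥ L_min > L_over ≥ 1. Then the set rf_{L_over}(n) of L_over-repeat-free strings of length n is an (L_min, L_over)-trace code: for all distinct x_1, x_2 ∈ rf_{L_over}(n), the trace spectra T_{L_min}^{L_over}(x_1) and T_{L_min}^{L_over}(x_2) are disjoint. -/
/-- The `ℓ`-substring of `x` at location `i`: `(x_i, x_{i+1}, …, x_{i+ℓ-1})`. -/
def substr {α : Type*} (x : List α) (i ℓ : ℕ) : List α := (x.drop i).take ℓ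

/-- `x` is `ℓ`-repeat-free: no `ℓ`-substring occurs at two distinct locations. -/
def RepeatFree {α : Type*} (ℓ : ℕ) (x : List α) : Prop :=
  ∀ i j : ℕ, i < j → j + ℓ ≤ x.length → substr x i ℓ ≠ substr x j ℓ

/-- `T` is an `(Lmin, Lover)`-trace of `x`: a multiset of substrings of `x` taken at
strictly increasing locations, starting at location `0`, ending flush with the end of `x`,
each of length at least `Lmin`, and with consecutive substrings overlapping in at least
`Lover` positions. -/
def IsTrace {α : Type*} (Lmin Lover : ℕ) (x : List α) (T : Multiset (List α)) : Prop :=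
  ∃ P : List (ℕ × ℕ),
    P ≠ [] ∧
    (∀ p ∈ P, Lmin ≤ p.2 ∧ p.1 + p.2 ≤ x.length) ∧
    P.Chain' (fun a b => a.1 < b.1 ∧ b.1 + Lover ≤ a.1 + a.2) ∧
    (∃ p ∈ P.head?, p.1 = 0) ∧
    (∃ p ∈ P.getLast?, p.1 + p.2 = x.length) ∧
    T = ↑(P.map fun p => substr x p.1 p.2)

/-- The `(Lmin, Lover)`-trace spectrum of `x`: the set of all its `(Lmin, Lover)`-traces. -/
def traceSpectrum {α : Type*} (Lmin Lover : ℕ) (x : List α) : Set (Multiset (List α)) :=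
  {T | IsTrace Lmin Lover x T}

/-!
Let `T` be a common trace of `x₁` and `x₂`, read off `x₂` at the locations `P`. Every read of
`T` is a substring of `x₁`, and since `x₁` is `Lover`-repeat-free, a read of length at least
`Lover` occurs in `x₁` at one location only. Consecutive reads overlap in at least `Lover`
symbols, so the shift between a read's location in `x₂` and its location in `x₁` is the same
for all reads. The first read starts at `0` in `x₂` and the last one ends at `n`, which forces
this common shift to be `0`. Hence `x₁` and `x₂` agree on every read, and the reads cover all
of `[0, n)`.
-/

section Substr

variable {α : Type*}

theorem substr_length_of_add_le {x : List α} {i ℓ : ℕ} (h : i + ℓ ≤ x.length) :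
    (substr x i ℓ).length = ℓ := by
  simp only [substr, List.length_take, List.length_drop]
  omega

theorem substr_substr (x : List α) (i : ℕ) {ℓ j m : ℕ} (h : j + m ≤ ℓ) :
    substr (substr x i ℓ) j m = substr x (i + j) m := by
  simp only [substr, List.drop_take, List.drop_drop, List.take_take]
  congr 1
  omega

theorem getElem?_substr (x : List α) (i : ℕ) {ℓ k : ℕ} (h : k < ℓ) :
    (substr x i ℓ)[k]? = x[i + k]? := by
  simp [substr, h, List.getElem?_drop]

/-- `substr x i 0 = []` for every `i`, even past the end of `x`. -/
theorem add_le_length_of_substr_eq {x y : List α} {a i m : ℕ} (hm : 0 < m)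
    (ha : a + m ≤ y.length) (h : substr y a m = substr x i m) : i + m ≤ x.length := by
  have hlen := congrArg List.length h
  simp only [substr, List.length_take, List.length_drop] at hlen
  omega

end Substr

theorem exists_mem_cover_of_isChain {P : List (ℕ × ℕ)}
    (hP : P.IsChain fun a b => b.1 ≤ a.1 + a.2) {t : ℕ}
    (hhead : ∃ p ∈ P.head?, p.1 ≤ t) (hlast : ∃ p ∈ P.getLast?, t < p.1 + p.2) :
    ∃ p ∈ P, p.1 ≤ t ∧ t < p.1 + p.2 := by
  induction P with
  | nil => simp at hhead
  | cons a L ih =>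
    obtain ⟨_, ⟨⟩, hat⟩ := hhead
    by_cases hta : t < a.1 + a.2
    · exact ⟨a, List.mem_cons_self, hat, hta⟩
    cases L with
    | nil => simp_all
    | cons b L =>
      obtain ⟨hab, hbL⟩ := List.isChain_cons_cons.mp hP
      obtain ⟨p, hp, hpt⟩ := ih hbL ⟨b, rfl, by omega⟩ (by simpa using hlast)
      exact ⟨p, List.mem_cons_of_mem a hp, hpt⟩

theorem eq_of_substr_eq_of_isChain {α : Type*} {x y : List α} (hlen : x.length = y.length)
    {P : List (ℕ × ℕ)} (hP : P.IsChain fun a b => b.1 ≤ a.1 + a.2)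
    (hhead : ∃ p ∈ P.head?, p.1 = 0) (hlast : ∃ p ∈ P.getLast?, p.1 + p.2 = y.length)
    (hseg : ∀ p ∈ P, substr x p.1 p.2 = substr y p.1 p.2) : x = y := by
  refine List.ext_getElem? fun t => ?_
  by_cases ht : t < y.length
  · obtain ⟨a, ha, ha₀⟩ := hhead
    obtain ⟨b, hb, hb_end⟩ := hlast
    obtain ⟨p, hp, hpt, htp⟩ :=
      exists_mem_cover_of_isChain hP (t := t) ⟨a, ha, by omega⟩ ⟨b, hb, by omega⟩
    have hk : p.1 + (t - p.1) = t := by omega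
    have hkp : t - p.1 < p.2 := by omega
    rw [← hk, ← getElem?_substr x _ hkp, ← getElem?_substr y _ hkp, hseg p hp]
  · rw [List.getElem?_eq_none (by omega), List.getElem?_eq_none (by omega)]

namespace RepeatFree

variable {α : Type*} {ℓ : ℕ} {x y : List α}

theorem eq_of_substr_eq (hx : RepeatFree ℓ x) {i j : ℕ} (hi : i + ℓ ≤ x.length)
    (hj : j + ℓ ≤ x.length) (h : substr x i ℓ = substr x j ℓ) : i = j := by
  rcases lt_trichotomy i j with hij | hij | hij
  · exact absurd h (hx i j hij hj)
  · exact hij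
  · exact absurd h.symm (hx j i hij hi)

theorem add_eq_add_of_overlap (hx : RepeatFree ℓ x) {a la b lb i j : ℕ} (hab : a ≤ b)
    (hov : b + ℓ ≤ a + la) (hlb : ℓ ≤ lb) (hi : substr y a la = substr x i la)
    (hix : i + la ≤ x.length) (hj : substr y b lb = substr x j lb)
    (hjx : j + lb ≤ x.length) : j + a = i + b := by
  have hfirst : substr y b ℓ = substr x (i + (b - a)) ℓ := by
    rw [← substr_substr x i (by omega : b - a + ℓ ≤ la), ← hi, substr_substr y a (by omega)]
    congr 1
    omega
  have hsecond : substr y b ℓ = substr x j ℓ := by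
    rw [← add_zero b, ← add_zero j, ← substr_substr y b (by omega : 0 + ℓ ≤ lb),
      ← substr_substr x j (by omega : 0 + ℓ ≤ lb), hj]
  have := hx.eq_of_substr_eq (by omega) (by omega) (hsecond.symm.trans hfirst)
  omega

theorem substr_eq_shift_of_isChain (hx : RepeatFree ℓ x) {P : List (ℕ × ℕ)}
    (hP : P.IsChain fun a b => a.1 < b.1 ∧ b.1 + ℓ ≤ a.1 + a.2)
    (hbound : ∀ p ∈ P, ℓ < p.2 ∧ p.1 + p.2 ≤ y.length)
    (hocc : ∀ p ∈ P, ∃ i, substr y p.1 p.2 = substr x i p.2) {a : ℕ × ℕ} (ha : a ∈ P.head?)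
    {c : ℕ} (hc : substr y a.1 a.2 = substr x (c + a.1) a.2) :
    ∀ p ∈ P, substr y p.1 p.2 = substr x (c + p.1) p.2 := by
  refine (List.IsChain.iff_mem.mp hP).induction _ P ?_ ?_
  · rintro p q ⟨hp, hq, hpq, hov⟩ hpc
    obtain ⟨j, hj⟩ := hocc q hq
    have := hx.add_eq_add_of_overlap hpq.le hov (hbound q hq).1.le hpc
      (add_le_length_of_substr_eq (Nat.zero_lt_of_lt (hbound p hp).1) (hbound p hp).2 hpc) hj
      (add_le_length_of_substr_eq (Nat.zero_lt_of_lt (hbound q hq).1) (hbound q hq).2 hj)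
    rwa [show j = c + q.1 by omega] at hj
  · cases P with
    | nil => simp at ha
    | cons b L =>
      obtain rfl : b = a := by simpa using ha
      exact fun _ => hc

theorem eq_of_isTrace (hx : RepeatFree ℓ x) (hlen : x.length = y.length) {Lmin : ℕ}
    (hℓ : ℓ < Lmin) {T : Multiset (List α)} (hT : IsTrace Lmin ℓ y T)
    (hocc : ∀ s ∈ T, ∃ i, substr x i s.length = s) : x = y := by
  obtain ⟨P, -, hbound, hP, ⟨a, ha, ha₀⟩, ⟨b, hb, hb_end⟩, rfl⟩ := hT
  have hP : P.IsChain fun a b => a.1 < b.1 ∧ b.1 + ℓ ≤ a.1 + a.2 := hP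
  have hbound' : ∀ p ∈ P, ℓ < p.2 ∧ p.1 + p.2 ≤ y.length :=
    fun p hp => ⟨hℓ.trans_le (hbound p hp).1, (hbound p hp).2⟩
  have hocc' : ∀ p ∈ P, ∃ i, substr y p.1 p.2 = substr x i p.2 := by
    intro p hp
    obtain ⟨i, hi⟩ := hocc _ (Multiset.mem_coe.2 (List.mem_map_of_mem hp))
    rw [substr_length_of_add_le (hbound p hp).2] at hi
    exact ⟨i, hi.symm⟩
  obtain ⟨c, hc⟩ := hocc' a (List.mem_of_mem_head? ha)
  have hshift := hx.substr_eq_shift_of_isChain hP hbound' hocc' ha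
    (by simpa [ha₀] using hc)
  have hb_mem := List.mem_of_mem_getLast? hb
  obtain rfl : c = 0 := by
    have := add_le_length_of_substr_eq (Nat.zero_lt_of_lt (hbound' b hb_mem).1)
      (hbound' b hb_mem).2 (hshift b hb_mem)
    omega
  refine eq_of_substr_eq_of_isChain hlen (hP.imp fun p q h => by omega) ⟨a, ha, ha₀⟩
    ⟨b, hb, hb_end⟩ fun p hp => ?_
  simpa using (hshift p hp).symm

end RepeatFree

theorem IsTrace.exists_substr_eq_of_mem {α : Type*} {Lmin Lover : ℕ} {x : List α}
    {T : Multiset (List α)} (hT : IsTrace Lmin Lover x T) {s : List α} (hs : s ∈ T) :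
    ∃ i, substr x i s.length = s := by
  obtain ⟨P, -, hbound, -, -, -, rfl⟩ := hT
  obtain ⟨p, hp, rfl⟩ := List.mem_map.mp (Multiset.mem_coe.mp hs)
  exact ⟨p.1, by rw [substr_length_of_add_le (hbound p hp).2]⟩

theorem repeat_free_is_trace_code_general
    {α : Type*}
    (n Lmin Lover : ℕ) (hLmin : Lover < Lmin)
    (x₁ x₂ : List α) (hx₁ : x₁.length = n) (hx₂ : x₂.length = n)
    (hrf₁ : RepeatFree Lover x₁) (hne : x₁ ≠ x₂) :
    traceSpectrum Lmin Lover x₁ ∩ traceSpectrum Lmin Lover x₂ = ∅ := by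
  rw [Set.eq_empty_iff_forall_notMem]
  rintro T ⟨hT₁, hT₂⟩
  exact hne (hrf₁.eq_of_isTrace (hx₁.trans hx₂.symm) hLmin hT₂
    fun _ hs => IsTrace.exists_substr_eq_of_mem hT₁ hs)

theorem repeat_free_is_trace_code
    {α : Type*} [Fintype α] {q : ℕ} (hcard : Fintype.card α = q) (hq : 2 ≤ q)
    (n Lmin Lover : ℕ) (hn : Lmin ≤ n) (hLmin : Lover < Lmin) (hLover : 1 ≤ Lover)
    (x₁ x₂ : List α) (hx₁ : x₁.length = n) (hx₂ : x₂.length = n)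
    (hrf₁ : RepeatFree Lover x₁) (hrf₂ : RepeatFree Lover x₂) (hne : x₁ ≠ x₂) :
    traceSpectrum Lmin Lover x₁ ∩ traceSpectrum Lmin Lover x₂ = ∅ :=
  repeat_free_is_trace_code_general n Lmin Lover hLmin x₁ x₂ hx₁ hx₂ hrf₁ hne
end

section
/- Let Σ be a finite alphabet of size q ≥ 2, and let n, L_min, L_over be positive integers with n ≥ L_min > L_over ≥ 1, (L_min − L_over) dividing (n − L_min), and q^{L_min} ≥ ⌈n/(L_min − L_over)⌉. Then every (L_min, L_over)-trace code C ⊆ Σ^n satisfies log_q |C| ≤ ⌈n/(L_min − L_over)⌉ · (2 log_q e + L_min − log_q ⌈n/(L_min − L_over)⌉). -/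
/-- `C` is an `(Lmin, Lover)`-trace code: distinct codewords have disjoint trace spectra. -/
def IsTraceCode {α : Type*} (Lmin Lover : ℕ) (C : Set (List α)) : Prop :=
  ∀ x₁ ∈ C, ∀ x₂ ∈ C, x₁ ≠ x₂ →
    traceSpectrum Lmin Lover x₁ ∩ traceSpectrum Lmin Lover x₂ = ∅

/-!
Every word of length `n = Lmin + m (Lmin - Lover)` has the trace formed by its `m + 1` substrings
of length `Lmin` at the locations `0, Lmin - Lover, 2 (Lmin - Lover), …`. In a trace code these
traces must differ between codewords, and they are multisets of `m + 1` words of length `Lmin`,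
so `|C| ≤ multichoose (q ^ Lmin) (m + 1) ≤ (e² q ^ Lmin / (m + 1)) ^ (m + 1)`. Since
`t ↦ t (c - log t)` is nondecreasing for `t ≤ q ^ c / e`, the exponent `m + 1` may be replaced by
`⌈n / (Lmin - Lover)⌉ ≥ m + 1`.
-/
open Real

section Traces

variable {α : Type*}

def uniformTrace (ℓ s k : ℕ) (x : List α) : Multiset (List α) :=
  ↑((List.range k).map fun i => substr x (i * s) ℓ)

@[simp]
lemma card_uniformTrace (ℓ s k : ℕ) (x : List α) : Multiset.card (uniformTrace ℓ s k x) = k := by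
  simp [uniformTrace]

lemma length_of_mem_uniformTrace {ℓ s m : ℕ} {x : List α} (hx : x.length = ℓ + m * s)
    {w : List α} (hw : w ∈ uniformTrace ℓ s (m + 1) x) : w.length = ℓ := by
  simp only [uniformTrace, Multiset.mem_coe, List.mem_map, List.mem_range] at hw
  obtain ⟨i, hi, rfl⟩ := hw
  have : i * s ≤ m * s := Nat.mul_le_mul_right s (by omega)
  simp only [substr, List.length_take, List.length_drop, hx]
  omega

lemma isTrace_uniformTrace {Lmin Lover ℓ s m : ℕ} {x : List α} (hℓ : Lmin ≤ ℓ) (hs : 0 < s)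
    (hover : s + Lover ≤ ℓ) (hx : x.length = ℓ + m * s) :
    IsTrace Lmin Lover x (uniformTrace ℓ s (m + 1) x) := by
  refine ⟨(List.range (m + 1)).map fun i => (i * s, ℓ), by simp, ?_, ?_,
    by simp [List.range_succ_eq_map], ?_, by simp [uniformTrace, Function.comp_def]⟩
  · simp only [List.mem_map, List.mem_range]
    rintro _ ⟨i, hi, rfl⟩
    have : i * s ≤ m * s := Nat.mul_le_mul_right s (by omega)
    exact ⟨hℓ, by omega⟩
  · show List.IsChain _ _
    rw [List.isChain_map, List.isChain_range_succ]
    intro i _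
    simp only [Nat.succ_mul]
    omega
  · simp [List.range_succ, hx, Nat.add_comm]

lemma IsTraceCode.injOn {Lmin Lover : ℕ} {C : Set (List α)} (hC : IsTraceCode Lmin Lover C)
    {f : List α → Multiset (List α)} (hf : ∀ x ∈ C, IsTrace Lmin Lover x (f x)) :
    Set.InjOn f C := by
  intro x₁ hx₁ x₂ hx₂ heq
  by_contra hne
  have hmem : f x₁ ∈ traceSpectrum Lmin Lover x₁ ∩ traceSpectrum Lmin Lover x₂ :=
    ⟨hf x₁ hx₁, heq ▸ hf x₂ hx₂⟩
  simp [hC x₁ hx₁ x₂ hx₂ hne] at hmem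

end Traces

def wordsOfLength (α : Type*) [Fintype α] (ℓ : ℕ) : Finset (List α) :=
  (Finset.univ : Finset (List.Vector α ℓ)).map ⟨List.Vector.toList, List.Vector.toList_injective⟩

lemma card_wordsOfLength (α : Type*) [Fintype α] (ℓ : ℕ) :
    (wordsOfLength α ℓ).card = Fintype.card α ^ ℓ := by
  simp [wordsOfLength, card_vector]

lemma mem_wordsOfLength {α : Type*} [Fintype α] {ℓ : ℕ} {w : List α} :
    w ∈ wordsOfLength α ℓ ↔ w.length = ℓ := by
  refine ⟨?_, fun hw => ?_⟩
  · simp only [wordsOfLength, Finset.mem_map, Finset.mem_univ, true_and]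
    rintro ⟨v, rfl⟩
    exact v.toList_length
  · exact Finset.mem_map.mpr ⟨⟨w, hw⟩, Finset.mem_univ _, rfl⟩

lemma Finset.card_le_multichoose_of_injOn {β γ : Type*} {C : Finset γ} {S : Finset β}
    {f : γ → Multiset β} {t : ℕ} (hf : Set.InjOn f C)
    (hcard : ∀ x ∈ C, Multiset.card (f x) = t) (hS : ∀ x ∈ C, ∀ b ∈ f x, b ∈ S) :
    C.card ≤ Nat.multichoose S.card t := by
  classical
  let symVal : Sym S t → Multiset β := fun s => (s : Multiset S).map Subtype.val
  calc C.card = (C.image f).card := (Finset.card_image_of_injOn hf).symm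
    _ ≤ (Finset.univ.image symVal).card := by
      refine Finset.card_le_card fun y hy => ?_
      obtain ⟨x, hx, rfl⟩ := Finset.mem_image.mp hy
      lift f x to Multiset S using hS x hx with u hu
      have hu : Multiset.card u = t := by simpa [← hu] using hcard x hx
      exact Finset.mem_image.mpr ⟨⟨u, hu⟩, Finset.mem_univ _, rfl⟩
    _ ≤ Fintype.card (Sym S t) := Finset.card_image_le
    _ = Nat.multichoose S.card t := by rw [Sym.card_sym_eq_multichoose, Fintype.card_coe]

open Nat in
lemma Nat.choose_le_exp_mul_div_pow (n k : ℕ) : (n.choose k : ℝ) ≤ (exp 1 * n / k) ^ k := by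
  rcases k.eq_zero_or_pos with rfl | hk
  · simp
  have hpow : (k : ℝ) ^ k ≤ exp k * k ! :=
    (div_le_iff₀ (by positivity)).mp (Real.pow_div_factorial_le_exp (x := k) (by positivity) k)
  calc (n.choose k : ℝ) ≤ n ^ k / k ! := Nat.choose_le_pow_div k n
    _ ≤ n ^ k * exp k / k ^ k := by
      rw [div_le_div_iff₀ (by positivity) (by positivity), mul_assoc]
      gcongr
    _ = (exp 1 * n / k) ^ k := by rw [div_pow, mul_pow, ← Real.exp_nat_mul, mul_one, mul_comm]

lemma Nat.multichoose_le_exp_sq_mul_div_pow {s t : ℕ} (hts : t ≤ s) :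
    (s.multichoose t : ℝ) ≤ (exp 1 ^ 2 * s / t) ^ t := by
  have hN : ((s + t - 1 : ℕ) : ℝ) ≤ exp 1 * s := by
    have h2 : (2 : ℝ) ≤ exp 1 := by linarith [Real.add_one_le_exp 1]
    have : s + t - 1 ≤ 2 * s := by omega
    calc ((s + t - 1 : ℕ) : ℝ) ≤ 2 * s := by exact_mod_cast this
      _ ≤ exp 1 * s := by gcongr
  calc (s.multichoose t : ℝ) ≤ (exp 1 * (s + t - 1 : ℕ) / t) ^ t := by
        rw [Nat.multichoose_eq]
        exact Nat.choose_le_exp_mul_div_pow _ _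
    _ ≤ (exp 1 * (exp 1 * s) / t) ^ t := by gcongr
    _ = (exp 1 ^ 2 * s / t) ^ t := by ring

lemma Real.mul_sub_logb_le_mul_sub_logb {b c t K : ℝ} (hb : 1 < b) (ht : 0 < t) (htK : t ≤ K)
    (hc : logb b K + logb b (exp 1) ≤ c) : t * (c - logb b t) ≤ K * (c - logb b K) := by
  have hK : 0 < K := ht.trans_le htK
  have hlog : t * (logb b K - logb b t) ≤ (K - t) * logb b (exp 1) := by
    have h := Real.log_le_sub_one_of_pos (div_pos hK ht)
    have h' : t * log (K / t) ≤ K - t := by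
      calc t * log (K / t) ≤ t * (K / t - 1) := by gcongr
        _ = K - t := by field_simp
    rw [← Real.logb_div hK.ne' ht.ne', Real.logb, Real.logb, Real.log_exp,
      mul_div_assoc', mul_one_div]
    gcongr
    exact Real.log_pos hb |>.le
  nlinarith [mul_le_mul_of_nonneg_left hc (sub_nonneg.2 htK)]

lemma Real.logb_le_of_le_multichoose {q L t M : ℕ} (hq : 2 ≤ q) (ht : 0 < t) (htq : t ≤ q ^ L)
    (hM : M ≤ (q ^ L).multichoose t) :
    logb q M ≤ t * (2 * logb q (exp 1) + L - logb q t) := by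
  have hq1 : (1 : ℝ) < q := by exact_mod_cast hq
  set B : ℝ := exp 1 ^ 2 * q ^ L / t
  have hB : 1 ≤ B := by
    have : (t : ℝ) ≤ q ^ L := by exact_mod_cast htq
    rw [le_div_iff₀ (by positivity), one_mul]
    have he : 1 ≤ exp 1 ^ 2 := one_le_pow₀ (Real.one_le_exp zero_le_one)
    nlinarith [mul_le_mul_of_nonneg_right he (pow_nonneg (zero_le_one.trans hq1.le) L)]
  have hMB : (M : ℝ) ≤ B ^ t := by
    calc (M : ℝ) ≤ (q ^ L).multichoose t := by exact_mod_cast hM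
      _ ≤ B ^ t := by simpa [B] using Nat.multichoose_le_exp_sq_mul_div_pow htq
  calc logb q M ≤ logb q (B ^ t) := by
        rcases M.eq_zero_or_pos with rfl | hM0
        · simpa using Real.logb_nonneg hq1 (one_le_pow₀ hB)
        · exact Real.logb_le_logb_of_le hq1 (by exact_mod_cast hM0) hMB
    _ = t * (2 * logb q (exp 1) + L - logb q t) := by
        rw [Real.logb_pow, Real.logb_div (by positivity) (by positivity),
          Real.logb_mul (by positivity) (by positivity), Real.logb_pow, Real.logb_pow,
          Real.logb_self_eq_one hq1]
        ring

theorem trace_code_log_size_bound_general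
    {α : Type*} [Fintype α] {q : ℕ} (hcard : Fintype.card α = q) (hq : 2 ≤ q)
    (n Lmin Lover : ℕ) (hn : Lmin ≤ n) (hLmin : Lover < Lmin)
    (hdvd : (Lmin - Lover) ∣ (n - Lmin))
    (hbig : (n + (Lmin - Lover) - 1) / (Lmin - Lover) ≤ q ^ Lmin)
    (C : Finset (List α)) (hlen : ∀ x ∈ C, x.length = n)
    (hcode : IsTraceCode Lmin Lover (↑C : Set (List α))) :
    Real.logb q (C.card) ≤
      ((n + (Lmin - Lover) - 1) / (Lmin - Lover) : ℕ) *
        (2 * Real.logb q (Real.exp 1) + Lmin -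
          Real.logb q (((n + (Lmin - Lover) - 1) / (Lmin - Lover) : ℕ))) := by
  obtain ⟨m, hsub⟩ := hdvd
  set K := (n + (Lmin - Lover) - 1) / (Lmin - Lover)
  have hlen_eq : ∀ x ∈ C, x.length = Lmin + m * (Lmin - Lover) := fun x hx => by
    rw [hlen x hx, Nat.mul_comm, ← hsub]
    omega
  have hinj : Set.InjOn (uniformTrace Lmin (Lmin - Lover) (m + 1)) (C : Set (List α)) :=
    hcode.injOn fun x hx => isTrace_uniformTrace le_rfl (by omega) (by omega) (hlen_eq x hx)
  have hcardC : C.card ≤ (q ^ Lmin).multichoose (m + 1) := by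
    simpa [card_wordsOfLength, hcard] using Finset.card_le_multichoose_of_injOn hinj
      (fun x _ => card_uniformTrace _ _ _ x)
      (fun x hx _ hw => mem_wordsOfLength.mpr (length_of_mem_uniformTrace (hlen_eq x hx) hw))
  have htK : m + 1 ≤ K := by
    rw [Nat.le_div_iff_mul_le (by omega), Nat.succ_mul, Nat.mul_comm m, ← hsub]
    omega
  have hq1 : (1 : ℝ) < q := by exact_mod_cast hq
  have hlogK : Real.logb q K ≤ Lmin := by
    calc Real.logb q K ≤ Real.logb q ((q : ℝ) ^ Lmin) :=
          Real.logb_le_logb_of_le hq1 (by exact_mod_cast m.succ_pos.trans_le htK)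
            (by exact_mod_cast hbig)
      _ = Lmin := by rw [Real.logb_pow, Real.logb_self_eq_one hq1, mul_one]
  calc Real.logb q C.card
        ≤ (m + 1 : ℕ) * (2 * Real.logb q (Real.exp 1) + Lmin - Real.logb q (m + 1 : ℕ)) :=
        Real.logb_le_of_le_multichoose hq m.succ_pos (htK.trans hbig) hcardC
    _ ≤ K * (2 * Real.logb q (Real.exp 1) + Lmin - Real.logb q K) :=
        Real.mul_sub_logb_le_mul_sub_logb hq1 (by positivity) (by exact_mod_cast htK)
          (by linarith [Real.logb_nonneg hq1 (Real.one_le_exp zero_le_one)])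

theorem trace_code_log_size_bound
    {α : Type*} [Fintype α] {q : ℕ} (hcard : Fintype.card α = q) (hq : 2 ≤ q)
    (n Lmin Lover : ℕ) (hn : Lmin ≤ n) (hLmin : Lover < Lmin) (hLover : 1 ≤ Lover)
    (hdvd : (Lmin - Lover) ∣ (n - Lmin))
    (hbig : (n + (Lmin - Lover) - 1) / (Lmin - Lover) ≤ q ^ Lmin)
    (C : Finset (List α)) (hlen : ∀ x ∈ C, x.length = n)
    (hcode : IsTraceCode Lmin Lover (↑C : Set (List α))) :
    Real.logb q (C.card) ≤
      ((n + (Lmin - Lover) - 1) / (Lmin - Lover) : ℕ) *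
        (2 * Real.logb q (Real.exp 1) + Lmin -
          Real.logb q (((n + (Lmin - Lover) - 1) / (Lmin - Lover) : ℕ))) :=
  trace_code_log_size_bound_general hcard hq n Lmin Lover hn hLmin hdvd hbig C hlen hcode
end
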